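/- Under the factor regression model with A, Σ_Z, Σ_E full rank, the best linear predictor satisfies ‖α*‖²_{Σ_X} = ‖β‖²_{Σ_Z} − β̄ᵀḠ⁻¹β̄, where β̄ = Σ_Z^{1/2}β, Ā = AΣ_Z^{1/2}, and Ḡ = I_K + ĀᵀΣ_E⁻¹Ā; consequently (1 − ξ⁻¹)·‖β‖²_{Σ_Z} ≤ ‖α*‖²_{Σ_X} ≤ ‖β‖²_{Σ_Z} whenever ξ = λ_K(AΣ_ZAᵀ)/‖Σ_E‖ > 1. -/

import Mathlib

open Matrix

/-- The `i`-th largest eigenvalue (0-indexed) of a Hermitian real matrix. -/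
noncomputable def eigDesc {n : ℕ} {M : Matrix (Fin n) (Fin n) ℝ} (hM : M.IsHermitian)
    (i : Fin n) : ℝ :=
  (hM.eigenvalues ∘ Tuple.sort hM.eigenvalues) i.rev

/-- The square root of a positive semidefinite matrix (definition from the older Mathlib,
where `Matrix.PosSemidef.sqrt` was part of the library). -/
noncomputable def Matrix.PosSemidef.sqrt {n : Type*} [Fintype n] [DecidableEq n]
    {A : Matrix n n ℝ} (hA : A.PosSemidef) : Matrix n n ℝ :=
  hA.1.eigenvectorUnitary.1 * diagonal ((↑) ∘ Real.sqrt ∘ hA.1.eigenvalues) *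
    (star hA.1.eigenvectorUnitary : Matrix n n ℝ)


/-! With `Ā = AΣ_Z^{1/2}` and `β̄ = Σ_Z^{1/2}β` we have `Σ_X = ĀĀᵀ + Σ_E` and `α* = Σ_X⁻¹Āβ̄`,
so `‖α*‖²_{Σ_X} = β̄ᵀĀᵀΣ_X⁻¹Āβ̄`, and the Woodbury identity turns `ĀᵀΣ_X⁻¹Ā` into `I - Ḡ⁻¹`.
Since `Ḡ⁻¹ ≥ 0`, this gives the upper bound. For the lower bound we argue in the Loewner order:
`Ḡ ≥ ĀᵀΣ_E⁻¹Ā ≥ ‖Σ_E‖⁻¹ĀᵀĀ ≥ ξ`, the last step because every eigenvalue of the invertible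
`ĀᵀĀ` is a nonzero eigenvalue of `ĀĀᵀ = AΣ_ZAᵀ`, which has exactly `K` of them. Hence
`Ḡ⁻¹ ≤ ξ⁻¹`. -/

open scoped MatrixOrder ComplexOrder

section Sqrt

variable {n : Type*} [Fintype n] [DecidableEq n]

theorem Matrix.PosSemidef.sqrt_eq_cfcSqrt {M : Matrix n n ℝ} (hM : M.PosSemidef) :
    hM.sqrt = CFC.sqrt M := by
  rw [CFC.sqrt_eq_real_sqrt M hM.nonneg, cfcₙ_eq_cfc, hM.1.cfc_eq, IsHermitian.cfc,
    Unitary.conjStarAlgAut_apply, Matrix.PosSemidef.sqrt]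
  rfl

theorem Matrix.transpose_cfcSqrt (M : Matrix n n ℝ) : (CFC.sqrt M)ᵀ = CFC.sqrt M := by
  simpa [IsHermitian, conjTranspose_eq_transpose_of_trivial] using
    (CFC.sqrt_nonneg M).posSemidef.isHermitian

theorem Matrix.mul_mul_transpose_eq_cfcSqrt {m : Type*} {M : Matrix n n ℝ} (hM : M.PosSemidef)
    (A : Matrix m n ℝ) : A * M * Aᵀ = (A * CFC.sqrt M) * (A * CFC.sqrt M)ᵀ := by
  conv_lhs => rw [← CFC.sqrt_mul_sqrt_self M hM.nonneg]
  rw [Matrix.transpose_mul, Matrix.transpose_cfcSqrt]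
  simp only [Matrix.mul_assoc]

theorem Matrix.dotProduct_mulVec_eq_cfcSqrt {M : Matrix n n ℝ} (hM : M.PosSemidef) (x : n → ℝ) :
    x ⬝ᵥ (M *ᵥ x) = (CFC.sqrt M *ᵥ x) ⬝ᵥ (CFC.sqrt M *ᵥ x) := by
  conv_lhs => rw [← CFC.sqrt_mul_sqrt_self M hM.nonneg, ← Matrix.mulVec_mulVec]
  nth_rw 1 [← Matrix.transpose_cfcSqrt M]
  rw [Matrix.dotProduct_transpose_mulVec]

theorem Matrix.rank_mul_cfcSqrt {m : Type*} {M : Matrix n n ℝ} (hM : M.PosDef)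
    (A : Matrix m n ℝ) : (A * CFC.sqrt M).rank = A.rank :=
  Matrix.rank_mul_eq_left_of_isUnit_det _ _ ((Matrix.isUnit_iff_isUnit_det _).1
    (CFC.isUnit_sqrt_iff_isStrictlyPositive.2 hM.isStrictlyPositive))

end Sqrt

section Woodbury

variable {R m k : Type*} [CommRing R] [Fintype m] [DecidableEq m] [Fintype k] [DecidableEq k]

theorem Matrix.isUnit_mul_add (B : Matrix m k R) (C : Matrix k m R) (E : Matrix m m R)
    (hE : IsUnit E) (hG : IsUnit (1 + C * E⁻¹ * B)) : IsUnit (B * C + E) := by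
  have hE' := (Matrix.isUnit_iff_isUnit_det _).1 hE
  have hfac : B * C + E = E * (1 + E⁻¹ * B * C) := by
    rw [Matrix.mul_add, Matrix.mul_one, ← Matrix.mul_assoc, ← Matrix.mul_assoc,
      Matrix.mul_nonsing_inv _ hE', Matrix.one_mul, add_comm]
  rw [Matrix.isUnit_iff_isUnit_det, hfac, Matrix.det_mul, Matrix.det_one_add_mul_comm,
    ← Matrix.mul_assoc]
  exact hE'.mul ((Matrix.isUnit_iff_isUnit_det _).1 hG)

theorem Matrix.mul_inv_add_mul_eq_one_sub_inv (B : Matrix m k R) (C : Matrix k m R)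
    (E : Matrix m m R) (hE : IsUnit E) (hG : IsUnit (1 + C * E⁻¹ * B)) :
    C * (B * C + E)⁻¹ * B = 1 - (1 + C * E⁻¹ * B)⁻¹ := by
  set G := 1 + C * E⁻¹ * B with hGdef
  have hN : C * E⁻¹ * B = G - 1 := by rw [hGdef]; abel
  have hGG : G * G⁻¹ = 1 := Matrix.mul_nonsing_inv _ ((Matrix.isUnit_iff_isUnit_det _).1 hG)
  have hGG' : G⁻¹ * G = 1 := Matrix.nonsing_inv_mul _ ((Matrix.isUnit_iff_isUnit_det _).1 hG)
  have hWoodbury := Matrix.add_mul_mul_inv_eq_sub E B 1 C hE isUnit_one (by rwa [inv_one])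
  rw [inv_one, Matrix.mul_one, add_comm E] at hWoodbury
  rw [hWoodbury, ← hGdef]
  calc C * (E⁻¹ - E⁻¹ * B * G⁻¹ * C * E⁻¹) * B
      = C * E⁻¹ * B - (C * E⁻¹ * B) * G⁻¹ * (C * E⁻¹ * B) := by
        simp only [Matrix.mul_sub, Matrix.sub_mul, Matrix.mul_assoc]
    _ = 1 - G⁻¹ := by
        rw [hN]
        simp only [Matrix.sub_mul, Matrix.mul_sub, Matrix.one_mul, Matrix.mul_one, hGG, hGG']
        abel

theorem Matrix.inv_mulVec_dotProduct_mulVec_inv_mulVec (B : Matrix m k R) (E : Matrix m m R)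
    (hE : IsUnit E) (hG : IsUnit (1 + Bᵀ * E⁻¹ * B)) (b : k → R) :
    ((B * Bᵀ + E)⁻¹ *ᵥ (B *ᵥ b)) ⬝ᵥ ((B * Bᵀ + E) *ᵥ ((B * Bᵀ + E)⁻¹ *ᵥ (B *ᵥ b)))
      = b ⬝ᵥ b - b ⬝ᵥ ((1 + Bᵀ * E⁻¹ * B)⁻¹ *ᵥ b) := by
  set M := B * Bᵀ + E
  have hM := (Matrix.isUnit_iff_isUnit_det _).1 (Matrix.isUnit_mul_add B Bᵀ E hE hG)
  calc (M⁻¹ *ᵥ (B *ᵥ b)) ⬝ᵥ (M *ᵥ (M⁻¹ *ᵥ (B *ᵥ b)))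
      = (B *ᵥ b) ⬝ᵥ (M⁻¹ *ᵥ (B *ᵥ b)) := by
        rw [Matrix.mulVec_mulVec _ M, Matrix.mul_nonsing_inv _ hM, Matrix.one_mulVec,
          dotProduct_comm]
    _ = b ⬝ᵥ ((Bᵀ * M⁻¹ * B) *ᵥ b) := by
        rw [← Matrix.mulVec_mulVec, ← Matrix.mulVec_mulVec, Matrix.dotProduct_transpose_mulVec,
          dotProduct_comm]
    _ = b ⬝ᵥ b - b ⬝ᵥ ((1 + Bᵀ * E⁻¹ * B)⁻¹ *ᵥ b) := by
        rw [Matrix.mul_inv_add_mul_eq_one_sub_inv B Bᵀ E hE hG, Matrix.sub_mulVec,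
          Matrix.one_mulVec, dotProduct_sub]

end Woodbury

theorem Matrix.PosDef.one_add_transpose_mul_inv_mul {m k : Type*} [Fintype m] [DecidableEq m]
    [Fintype k] [DecidableEq k] {E : Matrix m m ℝ} (hE : E.PosDef) (B : Matrix m k ℝ) :
    (1 + Bᵀ * E⁻¹ * B).PosDef := by
  simpa [conjTranspose_eq_transpose_of_trivial] using
    PosDef.one.add_posSemidef (hE.inv.posSemidef.conjTranspose_mul_mul_same B)

section LoewnerOrder

variable {𝕜 n : Type*} [RCLike 𝕜] [Fintype n]

theorem Matrix.conjTranspose_mul_mul_le_conjTranspose_mul_mul {m : Type*} [Fintype m]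
    {P Q : Matrix n n 𝕜} (h : P ≤ Q) (B : Matrix n m 𝕜) : Bᴴ * P * B ≤ Bᴴ * Q * B := by
  rw [Matrix.le_iff] at h ⊢
  simpa [Matrix.mul_sub, Matrix.sub_mul] using h.conjTranspose_mul_mul_same B

variable [DecidableEq n] {M : Matrix n n 𝕜}

theorem Matrix.PosDef.inv_eq_cfc (hM : M.PosDef) : M⁻¹ = cfc (·⁻¹ : ℝ → ℝ) M := by
  rw [cfc_ringInverse_id (a := M) hM.isUnit hM.isHermitian.isSelfAdjoint,
    Matrix.nonsing_inv_eq_ringInverse]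

theorem Matrix.PosDef.algebraMap_inv_le_inv (hM : M.PosDef) {r : ℝ}
    (h : M ≤ algebraMap ℝ _ r) : algebraMap ℝ _ r⁻¹ ≤ M⁻¹ := by
  rw [le_algebraMap_iff_spectrum_le hM.isHermitian.isSelfAdjoint] at h
  rw [hM.inv_eq_cfc, algebraMap_le_cfc_iff _ _ _ (M.finite_real_spectrum.continuousOn _)
    hM.isHermitian.isSelfAdjoint]
  intro x hx
  exact inv_anti₀ (hM.isStrictlyPositive.spectrum_pos hx) (h x hx)

theorem Matrix.PosDef.inv_le_algebraMap_inv (hM : M.PosDef) {r : ℝ} (hr : 0 < r)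
    (h : algebraMap ℝ _ r ≤ M) : M⁻¹ ≤ algebraMap ℝ _ r⁻¹ := by
  rw [algebraMap_le_iff_le_spectrum hM.isHermitian.isSelfAdjoint] at h
  rw [hM.inv_eq_cfc, cfc_le_algebraMap_iff _ _ _ (M.finite_real_spectrum.continuousOn _)
    hM.isHermitian.isSelfAdjoint]
  intro x hx
  exact inv_anti₀ hr (h x hx)

end LoewnerOrder

theorem Matrix.dotProduct_mulVec_le_of_le {n : Type*} [Fintype n] {P Q : Matrix n n ℝ}
    (h : P ≤ Q) (x : n → ℝ) : x ⬝ᵥ (P *ᵥ x) ≤ x ⬝ᵥ (Q *ᵥ x) := by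
  simpa [Matrix.sub_mulVec] using (Matrix.le_iff.1 h).dotProduct_mulVec_nonneg x

theorem Matrix.dotProduct_mulVec_le_mul_of_le_algebraMap {n : Type*} [Fintype n] [DecidableEq n]
    {M : Matrix n n ℝ} {r : ℝ} (h : M ≤ algebraMap ℝ _ r) (x : n → ℝ) :
    x ⬝ᵥ (M *ᵥ x) ≤ r * (x ⬝ᵥ x) := by
  simpa [Algebra.algebraMap_eq_smul_one, Matrix.smul_mulVec] using
    Matrix.dotProduct_mulVec_le_of_le h x

theorem Matrix.mem_spectrum_mul_comm_of_ne_zero {K m n : Type*} [Field K] [Fintype m]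
    [DecidableEq m] [Fintype n] [DecidableEq n] (A : Matrix m n K) (B : Matrix n m K) {x : K}
    (hx : x ≠ 0) (h : x ∈ spectrum K (A * B)) : x ∈ spectrum K (B * A) := by
  rw [mem_spectrum_iff_isRoot_charpoly, Polynomial.IsRoot.def] at h ⊢
  have := congrArg (Polynomial.eval x) (charpoly_mul_comm' A B)
  simp only [Polynomial.eval_mul, Polynomial.eval_pow, Polynomial.eval_X, h, mul_zero] at this
  exact (mul_eq_zero.1 this.symm).resolve_left (pow_ne_zero _ hx)

theorem Matrix.mulVec_injective_of_rank_eq_card {K m n : Type*} [Field K] [Fintype n]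
    {B : Matrix m n K} (hB : B.rank = Fintype.card n) : Function.Injective B.mulVec := by
  rw [Matrix.mulVec_injective_iff, linearIndependent_iff_card_eq_finrank_span, Set.finrank,
    ← Matrix.rank_eq_finrank_span_cols, hB]

section eigDesc

variable {n : ℕ} {M : Matrix (Fin n) (Fin n) ℝ} (hM : M.IsHermitian)

theorem eigDesc_le_of_card_le (i : Fin n) {c : ℝ}
    (h : (Finset.univ.filter fun j => c < hM.eigenvalues j).card ≤ i) : eigDesc hM i ≤ c := by
  by_contra! hlt
  have hsub : (Finset.Ici i.rev).map (Tuple.sort hM.eigenvalues).toEmbedding ⊆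
      Finset.univ.filter fun j => c < hM.eigenvalues j := by
    intro j hj
    obtain ⟨k, hk, rfl⟩ := Finset.mem_map.1 hj
    exact Finset.mem_filter.2 ⟨Finset.mem_univ _,
      hlt.trans_le (Tuple.monotone_sort hM.eigenvalues (Finset.mem_Ici.1 hk))⟩
  have hcard := Finset.card_le_card hsub
  rw [Finset.card_map, Fin.card_Ici, Fin.val_rev] at hcard
  omega

theorem eigenvalues_le_eigDesc_zero (hn : 0 < n) (j : Fin n) :
    hM.eigenvalues j ≤ eigDesc hM ⟨0, hn⟩ := by
  have hj : hM.eigenvalues j = hM.eigenvalues (Tuple.sort hM.eigenvalues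
      ((Tuple.sort hM.eigenvalues)⁻¹ j)) := by simp
  rw [hj]
  apply Tuple.monotone_sort hM.eigenvalues
  have := ((Tuple.sort hM.eigenvalues)⁻¹ j).isLt
  simp only [Fin.le_def, Fin.val_rev]
  omega

theorem le_algebraMap_eigDesc_zero (hn : 0 < n) : M ≤ algebraMap ℝ _ (eigDesc hM ⟨0, hn⟩) := by
  rw [le_algebraMap_iff_spectrum_le hM.isSelfAdjoint, hM.spectrum_real_eq_range_eigenvalues]
  rintro _ ⟨j, rfl⟩
  exact eigenvalues_le_eigDesc_zero hM hn j

theorem eigDesc_le_of_mem_spectrum {x : ℝ} (hx : x ∈ spectrum ℝ M) (hpos : 0 < x) (i : Fin n)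
    (hi : (i : ℕ) + 1 = M.rank) : eigDesc hM i ≤ x := by
  obtain ⟨j₀, rfl⟩ := hM.spectrum_real_eq_range_eigenvalues ▸ hx
  apply eigDesc_le_of_card_le
  have hsub : (Finset.univ.filter fun j => hM.eigenvalues j₀ < hM.eigenvalues j) ⊆
      (Finset.univ.filter fun j => hM.eigenvalues j ≠ 0).erase j₀ := by
    intro j hj
    have hj := (Finset.mem_filter.1 hj).2
    exact Finset.mem_erase.2 ⟨fun h => (h ▸ hj).false,
      Finset.mem_filter.2 ⟨Finset.mem_univ _, (hpos.trans hj).ne'⟩⟩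
  have hj₀ : j₀ ∈ Finset.univ.filter fun j => hM.eigenvalues j ≠ 0 := by simpa using hpos.ne'
  have hcard := Finset.card_le_card hsub
  rw [Finset.card_erase_of_mem hj₀] at hcard
  rw [hM.rank_eq_card_non_zero_eigs, Fintype.card_subtype] at hi
  omega

end eigDesc

theorem algebraMap_eigDesc_le_transpose_mul_self {p : ℕ} {k : Type*} [Fintype k] [DecidableEq k]
    {B : Matrix (Fin p) k ℝ} (hB : B.rank = Fintype.card k) {W : Matrix (Fin p) (Fin p) ℝ}
    (hW : W.IsHermitian) (hWB : W = B * Bᵀ) (i : Fin p) (hi : (i : ℕ) + 1 = Fintype.card k) :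
    algebraMap ℝ _ (eigDesc hW i) ≤ Bᵀ * B := by
  have hpos : (Bᵀ * B).PosDef := by
    simpa [conjTranspose_eq_transpose_of_trivial] using
      Matrix.PosDef.conjTranspose_mul_self B (Matrix.mulVec_injective_of_rank_eq_card hB)
  rw [algebraMap_le_iff_le_spectrum hpos.isHermitian.isSelfAdjoint]
  intro x hx
  have hx₀ := hpos.isStrictlyPositive.spectrum_pos hx
  refine eigDesc_le_of_mem_spectrum hW ?_ hx₀ i ?_
  · rw [hWB]
    exact Matrix.mem_spectrum_mul_comm_of_ne_zero _ _ hx₀.ne' hx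
  · rw [hi, hWB, Matrix.rank_self_mul_transpose, hB]

theorem algebraMap_div_eigDesc_le_one_add {p : ℕ} {k : Type*} [Fintype k] [DecidableEq k]
    {B : Matrix (Fin p) k ℝ} (hB : B.rank = Fintype.card k) {E : Matrix (Fin p) (Fin p) ℝ}
    (hE : E.PosDef) {W : Matrix (Fin p) (Fin p) ℝ} (hW : W.IsHermitian) (hWB : W = B * Bᵀ)
    (i : Fin p) (hi : (i : ℕ) + 1 = Fintype.card k) (hp : 0 < p) :
    algebraMap ℝ _ (eigDesc hW i / eigDesc hE.1 ⟨0, hp⟩) ≤ 1 + Bᵀ * E⁻¹ * B := by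
  set lmax := eigDesc hE.1 ⟨0, hp⟩
  have hlmax : 0 < lmax := hE.eigenvalues_pos _
  calc algebraMap ℝ _ (eigDesc hW i / lmax) = lmax⁻¹ • algebraMap ℝ _ (eigDesc hW i) := by
        rw [Algebra.algebraMap_eq_smul_one, Algebra.algebraMap_eq_smul_one, smul_smul,
          div_eq_inv_mul]
    _ ≤ lmax⁻¹ • (Bᵀ * B) := smul_le_smul_of_nonneg_left
        (algebraMap_eigDesc_le_transpose_mul_self hB hW hWB i hi) (inv_nonneg.2 hlmax.le)
    _ = Bᵀ * algebraMap ℝ (Matrix (Fin p) (Fin p) ℝ) lmax⁻¹ * B := by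
        rw [Algebra.algebraMap_eq_smul_one, Matrix.mul_smul, Matrix.smul_mul, Matrix.mul_one]
    _ ≤ Bᵀ * E⁻¹ * B := by
        simpa [conjTranspose_eq_transpose_of_trivial] using
          Matrix.conjTranspose_mul_mul_le_conjTranspose_mul_mul
            (hE.algebraMap_inv_le_inv (le_algebraMap_eigDesc_zero hE.1 hp)) B
    _ ≤ 1 + Bᵀ * E⁻¹ * B := le_add_of_nonneg_left (Matrix.nonneg_iff_posSemidef.2 .one)

/-- With `A`, `Σ_Z`, `Σ_E` full rank, the best linear predictor `α* = Σ_X⁻¹AΣ_Zβ`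
satisfies `‖α*‖²_{Σ_X} = ‖β‖²_{Σ_Z} − β̄ᵀḠ⁻¹β̄`, where `β̄ = Σ_Z^{1/2}β`,
`Ā = AΣ_Z^{1/2}`, `Ḡ = I_K + ĀᵀΣ_E⁻¹Ā`; consequently
`(1 − ξ⁻¹)·‖β‖²_{Σ_Z} ≤ ‖α*‖²_{Σ_X} ≤ ‖β‖²_{Σ_Z}` whenever
`ξ = λ_K(AΣ_ZAᵀ)/‖Σ_E‖ > 1` (for a PSD matrix the operator norm is its largest
eigenvalue). -/
theorem stmt10 {p K : ℕ} (hK : 0 < K) (hKp : K ≤ p)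
    (A : Matrix (Fin p) (Fin K) ℝ) (hA : A.rank = K)
    {SZ : Matrix (Fin K) (Fin K) ℝ} (hSZ : SZ.PosDef)
    {SE : Matrix (Fin p) (Fin p) ℝ} (hSE : SE.PosDef)
    (β : Fin K → ℝ)
    (hZA : (A * SZ * Aᵀ).IsHermitian)
    (ξ : ℝ) (hξ : ξ = eigDesc hZA ⟨K - 1, by omega⟩ / eigDesc hSE.1 ⟨0, by omega⟩)
    (αstar : Fin p → ℝ)
    (hαstar : αstar = (A * SZ * Aᵀ + SE)⁻¹ *ᵥ (A *ᵥ (SZ *ᵥ β))) :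
    αstar ⬝ᵥ ((A * SZ * Aᵀ + SE) *ᵥ αstar)
      = β ⬝ᵥ (SZ *ᵥ β) -
        (hSZ.posSemidef.sqrt *ᵥ β) ⬝ᵥ
          (((1 : Matrix (Fin K) (Fin K) ℝ) +
              (A * hSZ.posSemidef.sqrt)ᵀ * SE⁻¹ * (A * hSZ.posSemidef.sqrt))⁻¹ *ᵥ
            (hSZ.posSemidef.sqrt *ᵥ β)) ∧
    (1 < ξ →
      (1 - ξ⁻¹) * (β ⬝ᵥ (SZ *ᵥ β)) ≤ αstar ⬝ᵥ ((A * SZ * Aᵀ + SE) *ᵥ αstar) ∧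
      αstar ⬝ᵥ ((A * SZ * Aᵀ + SE) *ᵥ αstar) ≤ β ⬝ᵥ (SZ *ᵥ β)) := by
  rw [hSZ.posSemidef.sqrt_eq_cfcSqrt]
  set S := CFC.sqrt SZ
  set B := A * S
  have hB : B.rank = Fintype.card (Fin K) := by
    rw [Matrix.rank_mul_cfcSqrt hSZ, hA, Fintype.card_fin]
  have hW : A * SZ * Aᵀ = B * Bᵀ := Matrix.mul_mul_transpose_eq_cfcSqrt hSZ.posSemidef A
  have hG := hSE.one_add_transpose_mul_inv_mul B
  have hβ := Matrix.dotProduct_mulVec_eq_cfcSqrt hSZ.posSemidef β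
  have hval : αstar ⬝ᵥ ((A * SZ * Aᵀ + SE) *ᵥ αstar)
      = β ⬝ᵥ (SZ *ᵥ β) - (S *ᵥ β) ⬝ᵥ ((1 + Bᵀ * SE⁻¹ * B)⁻¹ *ᵥ (S *ᵥ β)) := by
    have hv : A *ᵥ (SZ *ᵥ β) = B *ᵥ (S *ᵥ β) := by
      rw [Matrix.mulVec_mulVec, Matrix.mulVec_mulVec, Matrix.mul_assoc,
        CFC.sqrt_mul_sqrt_self SZ hSZ.posSemidef.nonneg]
    rw [hβ, hαstar, hW, hv]
    exact Matrix.inv_mulVec_dotProduct_mulVec_inv_mulVec B SE hSE.isUnit hG.isUnit _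
  refine ⟨hval, fun hξ1 => ?_⟩
  have hGξ : algebraMap ℝ _ ξ ≤ 1 + Bᵀ * SE⁻¹ * B := hξ ▸
    algebraMap_div_eigDesc_le_one_add hB hSE hZA hW ⟨K - 1, by omega⟩
      (by simp only [Fintype.card_fin]; omega) (by omega)
  have hup := Matrix.dotProduct_mulVec_le_mul_of_le_algebraMap
    (hG.inv_le_algebraMap_inv (by linarith) hGξ) (S *ᵥ β)
  have hlow := hG.inv.posSemidef.dotProduct_mulVec_nonneg (S *ᵥ β)
  rw [star_trivial] at hlow
  rw [hval, hβ]
  constructor <;> linarith
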